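/- arXiv:math/0601132 — 3 statements merged into one kernel-verified Lean document; each statement's English description precedes it below -/
import Mathlib

section
/- For any x, y in SL(3,ℂ), the commutator trace relation holds: tr(x y x⁻¹ y⁻¹) + tr(y x y⁻¹ x⁻¹) = tr(x)tr(x⁻¹)tr(y)tr(y⁻¹) + tr(x)tr(x⁻¹) + tr(y)tr(y⁻¹) + tr(xy)tr(x⁻¹y⁻¹) + tr(xy⁻¹)tr(x⁻¹y) − tr(x⁻¹)tr(y)tr(xy⁻¹) − tr(x)tr(y⁻¹)tr(x⁻¹y) − tr(x)tr(y)tr(x⁻¹y⁻¹) − tr(xy)tr(x⁻¹)tr(y⁻¹) − 3. -/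
open Matrix

theorem commutator_trace_relation (x y : Matrix (Fin 3) (Fin 3) ℂ)
    (hx : x.det = 1) (hy : y.det = 1) :
    trace (x * y * x⁻¹ * y⁻¹) + trace (y * x * y⁻¹ * x⁻¹) =
      trace x * trace x⁻¹ * trace y * trace y⁻¹
      + trace x * trace x⁻¹ + trace y * trace y⁻¹
      + trace (x * y) * trace (x⁻¹ * y⁻¹)
      + trace (x * y⁻¹) * trace (x⁻¹ * y)
      - trace x⁻¹ * trace y * trace (x * y⁻¹)
      - trace x * trace y⁻¹ * trace (x⁻¹ * y)
      - trace x * trace y * trace (x⁻¹ * y⁻¹)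
      - trace (x * y) * trace x⁻¹ * trace y⁻¹ - 3 := by
  have hx1 : x⁻¹ = x.adjugate := by rw [Matrix.inv_def, hx]; simp
  have hy1 : y⁻¹ = y.adjugate := by rw [Matrix.inv_def, hy]; simp
  rw [Matrix.det_fin_three] at hx hy
  rw [hx1, hy1]
  simp only [Matrix.trace_fin_three, Matrix.mul_apply, Fin.sum_univ_three,
    Matrix.adjugate_fin_three, Matrix.of_apply, Matrix.cons_val', Matrix.cons_val_zero,
    Matrix.cons_val_one, Matrix.head_cons, Matrix.empty_val', Matrix.cons_val_fin_one,
    Matrix.head_fin_const, Matrix.cons_val_two, Matrix.tail_cons]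
  linear_combination ((-3) + (-1) * y 1 2 * y 2 1 * y 2 2 + (1) * y 1 1 * y 2 2 * y 2 2 + (-1) * y 1 1 * y 1 2 * y 2 1 + (1) * y 1 1 * y 1 1 * y 2 2 + (-1) * y 0 2 * y 2 0 * y 2 2 + (-1) * y 0 2 * y 1 1 * y 2 0 + (-1) * y 0 1 * y 1 0 * y 2 2 + (-1) * y 0 1 * y 1 0 * y 1 1 + (1) * y 0 0 * y 2 2 * y 2 2 + (-1) * y 0 0 * y 1 2 * y 2 1 + (3) * y 0 0 * y 1 1 * y 2 2 + (1) * y 0 0 * y 1 1 * y 1 1 + (-1) * y 0 0 * y 0 2 * y 2 0 + (-1) * y 0 0 * y 0 1 * y 1 0 + (1) * y 0 0 * y 0 0 * y 2 2 + (1) * y 0 0 * y 0 0 * y 1 1) * hx + ((-1) * x 1 2 * x 2 1 * x 2 2 + (1) * x 1 1 * x 2 2 * x 2 2 + (-1) * x 1 1 * x 1 2 * x 2 1 + (1) * x 1 1 * x 1 1 * x 2 2 + (-1) * x 0 2 * x 2 0 * x 2 2 + (2) * x 0 2 * x 1 1 * x 2 0 + (-3) * x 0 2 * x 1 0 * x 2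 1 + (-3) * x 0 1 * x 1 2 * x 2 0 + (2) * x 0 1 * x 1 0 * x 2 2 + (-1) * x 0 1 * x 1 0 * x 1 1 + (1) * x 0 0 * x 2 2 * x 2 2 + (2) * x 0 0 * x 1 2 * x 2 1 + (1) * x 0 0 * x 1 1 * x 1 1 + (-1) * x 0 0 * x 0 2 * x 2 0 + (-1) * x 0 0 * x 0 1 * x 1 0 + (1) * x 0 0 * x 0 0 * x 2 2 + (1) * x 0 0 * x 0 0 * x 1 1) * hy
end

section
/- Define the bilinear form B(A,B) = n·tr(AB) − tr(A)tr(B) on n×n complex matrices. Then for any matrices A₁,…,A_{n²}, B₁,…,B_{n²}, the n²×n² matrix Λ with entries Λ_{ij} = B(A_i, B_j) is singular, i.e., det Λ = 0. -/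
open Matrix

theorem bilinear_form_matrix_singular (n : ℕ) (hn : 0 < n)
    (A B : Fin (n^2) → Matrix (Fin n) (Fin n) ℂ) :
    (Matrix.of fun i j : Fin (n^2) =>
      (n : ℂ) * trace (A i * B j) - trace (A i) * trace (B j)).det = 0 := by
  have e : Fin (n^2) ≃ Fin n × Fin n :=
    (finCongr (sq n)).trans finProdFinEquiv.symm
  set C : Fin (n^2) → Matrix (Fin n) (Fin n) ℂ :=
    fun i => (n : ℂ) • A i - (trace (A i)) • (1 : Matrix (Fin n) (Fin n) ℂ) with hC
  set P : Matrix (Fin (n^2)) (Fin (n^2)) ℂ :=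
    Matrix.of (fun i m => C i (e m).1 (e m).2) with hP
  set Q : Matrix (Fin (n^2)) (Fin (n^2)) ℂ :=
    Matrix.of (fun m j => B j (e m).2 (e m).1) with hQ
  have hfac : (Matrix.of fun i j : Fin (n^2) =>
      (n : ℂ) * trace (A i * B j) - trace (A i) * trace (B j)) = P * Q := by
    ext i j
    simp only [Matrix.mul_apply, of_apply, hP, hQ]
    rw [Fintype.sum_equiv e (fun m => C i (e m).1 (e m).2 * B j (e m).2 (e m).1)
        (fun p => C i p.1 p.2 * B j p.2 p.1) (fun m => rfl)]
    rw [Fintype.sum_prod_type]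
    have : ∀ k l : Fin n, C i k l * B j l k =
        (n : ℂ) * (A i k l * B j l k) - (if k = l then trace (A i) * B j l k else 0) := by
      intro k l
      simp only [hC, Matrix.sub_apply, Matrix.smul_apply, Matrix.one_apply, smul_eq_mul]
      by_cases h : k = l <;> simp [h] <;> ring
    simp only [this, Finset.sum_sub_distrib, Finset.sum_ite_eq, Finset.mem_univ, if_true]
    simp only [trace, diag, Matrix.mul_apply, Finset.mul_sum]
  rw [hfac, Matrix.det_mul]
  have hPdet : P.det = 0 := by
    rw [← Matrix.exists_mulVec_eq_zero_iff]
    refine ⟨fun m => if (e m).1 = (e m).2 then 1 else 0, ?_, ?_⟩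
    · intro h
      have : (fun m => if (e m).1 = (e m).2 then (1:ℂ) else 0)
          (e.symm (⟨0, hn⟩, ⟨0, hn⟩)) = 0 := by rw [h]; rfl
      simp at this
    · ext i
      simp only [Matrix.mulVec, dotProduct, hP, of_apply, Pi.zero_apply]
      rw [Fintype.sum_equiv e
          (fun m => C i (e m).1 (e m).2 * (if (e m).1 = (e m).2 then 1 else 0))
          (fun p => C i p.1 p.2 * (if p.1 = p.2 then 1 else 0)) (fun m => rfl)]
      rw [Fintype.sum_prod_type]
      simp only [mul_ite, mul_one, mul_zero, Finset.sum_ite_eq, Finset.mem_univ, if_true]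
      simp [hC, Matrix.sub_apply, Finset.sum_sub_distrib, trace, diag,
        Finset.mul_sum, Finset.sum_mul, mul_comm]
  rw [hPdet, zero_mul]
end

section
/- For any 3×3 complex matrices x, y, z: 3·x² z y² = pol(y, x² z) + x·pol(y, x z) − pol(x, y²)·z − pol(x, y)·z·y + x²·pol(y, z), where pol(a,b) := b a² + a² b + a b a. -/
open Matrix

theorem degree_reduction (x y z : Matrix (Fin 3) (Fin 3) ℂ)
    (pol : Matrix (Fin 3) (Fin 3) ℂ → Matrix (Fin 3) (Fin 3) ℂ → Matrix (Fin 3) (Fin 3) ℂ)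
    (hpol : ∀ a b, pol a b = b * a^2 + a^2 * b + a * b * a) :
    (3 : ℂ) • (x^2 * z * y^2) =
      pol y (x^2 * z) + x * pol y (x * z) - pol x (y^2) * z - pol x y * z * y
      + x^2 * pol y z := by
  simp only [hpol]
  rw [show (3:ℂ) = 1+1+1 by norm_num, add_smul, add_smul, one_smul]
  noncomm_ring
end
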